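/- arXiv:2406.16420 — 2 statements merged into one kernel-verified Lean document; each statement's English description precedes it below -/
import Mathlib

section
/- (Conditional distributions in the $q$-multinomial) Let $0<q<1$, $\theta_1,\ldots,\theta_k>0$, $n\in\mathbb{N}$, and let $f^B_{\mathcal X}$ be the $q$-multinomial probability function of the first kind with $k\ge 2$ components. Then the joint probability function factorizes as $f^B_{\mathcal X}(x_1,\ldots,x_k) = \left[\binom{n}{x_1}_q \frac{\theta_1^{x_1} q^{\binom{x_1}{2}}}{\prod_{i=1}^{n}(1+\theta_1 q^{i-1})}\right] \prod_{j=2}^{k} \left[\binom{n-s_{j-1}}{x_j}_q \frac{\theta_j^{x_j} q^{\binom{x_j}{2}}}{\prod_{i=1}^{n-s_{j-1}}(1+\theta_j q^{i-1})}\right]$, where $s_{j-1}=\sum_{i=1}^{j-1}x_i$; i.e. the conditional distribution of $X_j$ given $X_1=x_1,\ldots,X_{j-1}=x_{j-1}$ is $q$-binomial of the first kind with parameters $n-s_{j-1}$ and $\theta_j$. -/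
open scoped BigOperators

/-- The `q`-factorial `[n]_q! = ∏_{k=1}^n (1-q^k)/(1-q)`. -/
noncomputable def qFact (q : ℝ) (n : ℕ) : ℝ :=
  ∏ k ∈ Finset.range n, (1 - q ^ (k + 1)) / (1 - q)

/-- The `q`-binomial coefficient. -/
noncomputable def qBinom (q : ℝ) (n x : ℕ) : ℝ :=
  qFact q n / (qFact q x * qFact q (n - x))

/-- The `q`-multinomial coefficient. -/
noncomputable def qMultinomCoeff (q : ℝ) (n : ℕ) {k : ℕ} (x : Fin k → ℕ) : ℝ :=
  qFact q n / ((∏ j, qFact q (x j)) * qFact q (n - ∑ j, x j))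

/-- The `q`-multinomial probability function of the first kind. -/
noncomputable def qMultinomPF (q : ℝ) (n : ℕ) {k : ℕ} (θ : Fin k → ℝ) (x : Fin k → ℕ) : ℝ :=
  qMultinomCoeff q n x *
    ∏ j, (θ j ^ x j * q ^ (x j * (x j - 1) / 2) /
      ∏ i ∈ Finset.range (n - ∑ i ∈ Finset.univ.filter (· < j), x i), (1 + θ j * q ^ i))

/-! The `q`-multinomial coefficient telescopes,
`[n; x₁, …, x_k]_q = ∏ⱼ [n - s_{j-1} choose x_j]_q`, because the factorials `[n - s_j]_q!`
cancel in consecutive factors; the remaining factors of the two products then agree term by term. -/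

open Finset

lemma qFact_pos {q : ℝ} (hq : |q| < 1) (n : ℕ) : 0 < qFact q n := by
  have hq1 : q < 1 := (abs_lt.mp hq).2
  refine prod_pos fun k _ => div_pos ?_ (by linarith)
  have : q ^ (k + 1) < 1 := (le_abs_self _).trans_lt <| by
    rw [abs_pow]; exact pow_lt_one₀ (abs_nonneg q) hq k.succ_ne_zero
  linarith

lemma Fin.sum_filter_lt_succ {M : Type*} [AddCommMonoid M] {k : ℕ} (y : Fin (k + 1) → M)
    (j : Fin k) :
    ∑ i ∈ univ.filter (· < j.succ), y i = y 0 + ∑ i ∈ univ.filter (· < j), y i.succ := by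
  simp [sum_filter, Fin.sum_univ_succ, Fin.succ_pos, Fin.succ_lt_succ_iff]

lemma qMultinomCoeff_elim0 {q : ℝ} (hq : |q| < 1) (n : ℕ) :
    qMultinomCoeff q n (Fin.elim0 : Fin 0 → ℕ) = 1 := by
  simp [qMultinomCoeff, (qFact_pos hq n).ne']

lemma qMultinomCoeff_eq_qBinom_mul {q : ℝ} (hq : |q| < 1) (n : ℕ) {k : ℕ}
    (x : Fin (k + 1) → ℕ) :
    qMultinomCoeff q n x = qBinom q n (x 0) * qMultinomCoeff q (n - x 0) (Fin.tail x) := by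
  have h₁ := (qFact_pos hq (x 0)).ne'
  have h₂ := (qFact_pos hq (n - x 0)).ne'
  have h₃ := (qFact_pos hq (n - x 0 - ∑ j : Fin k, x j.succ)).ne'
  have h₄ : ∏ j : Fin k, qFact q (x j.succ) ≠ 0 :=
    prod_ne_zero_iff.mpr fun j _ => (qFact_pos hq _).ne'
  simp only [qMultinomCoeff, qBinom, Fin.tail, Fin.prod_univ_succ, Fin.sum_univ_succ,
    ← Nat.sub_sub]
  field_simp

theorem prod_qBinom_eq_qMultinomCoeff {q : ℝ} (hq : |q| < 1) :
    ∀ {k : ℕ} (n : ℕ) (x : Fin k → ℕ),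
      ∏ j, qBinom q (n - ∑ i ∈ univ.filter (· < j), x i) (x j) = qMultinomCoeff q n x
  | 0, n, x => by rw [Subsingleton.elim x Fin.elim0, qMultinomCoeff_elim0 hq]; rfl
  | k + 1, n, x => by
    simp only [Fin.prod_univ_succ, Fin.sum_filter_lt_succ, Fin.not_lt_zero, filter_false,
      sum_empty, Nat.sub_zero, ← Nat.sub_sub]
    rw [qMultinomCoeff_eq_qBinom_mul hq n x,
      ← prod_qBinom_eq_qMultinomCoeff hq (n - x 0) (Fin.tail x)]
    rfl

theorem qMultinomial_factorization_general (q : ℝ) (hq0 : 0 < q) (hq1 : q < 1)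
    (k : ℕ) (θ : Fin k → ℝ) (n : ℕ)
    (x : Fin k → ℕ) :
    qMultinomPF q n θ x =
      ∏ j, (qBinom q (n - ∑ i ∈ Finset.univ.filter (· < j), x i) (x j) *
        (θ j ^ x j * q ^ (x j * (x j - 1) / 2)) /
        ∏ i ∈ Finset.range (n - ∑ i ∈ Finset.univ.filter (· < j), x i), (1 + θ j * q ^ i)) := by
  rw [qMultinomPF, ← prod_qBinom_eq_qMultinomCoeff (abs_lt.mpr ⟨by linarith, hq1⟩) n x,
    ← prod_mul_distrib]
  exact prod_congr rfl fun j _ => mul_div_assoc _ _ _ |>.symm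

/-- **Conditional distributions in the q-multinomial**: the joint p.f. factorizes into a
product of `q`-binomial p.f.'s of the first kind, the `j`-th with parameters
`n - s_{j-1}` and `θ_j`, where `s_{j-1} = ∑_{i<j} x_i`. -/
theorem qMultinomial_factorization (q : ℝ) (hq0 : 0 < q) (hq1 : q < 1)
    (k : ℕ) (hk : 2 ≤ k) (θ : Fin k → ℝ) (hθ : ∀ j, 0 < θ j) (n : ℕ)
    (x : Fin k → ℕ) (hx : ∑ j, x j ≤ n) :
    qMultinomPF q n θ x =
      ∏ j, (qBinom q (n - ∑ i ∈ Finset.univ.filter (· < j), x i) (x j) *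
        (θ j ^ x j * q ^ (x j * (x j - 1) / 2)) /
        ∏ i ∈ Finset.range (n - ∑ i ∈ Finset.univ.filter (· < j), x i), (1 + θ j * q ^ i)) :=
  qMultinomial_factorization_general q hq0 hq1 k θ n x
end

section
/- (Mean of the deformed $q$-binomial variable) Let $0<q<1$, $\theta>0$, $n\in\mathbb{N}$, and let $X$ follow the $q$-binomial distribution of the first kind with probability function $f_X^B(x)=\binom{n}{x}_q q^{\binom{x}{2}}\theta^x \prod_{j=1}^{n}(1+\theta q^{j-1})^{-1}$, $x=0,1,\ldots,n$. Then the mean of the deformed random variable $[X]_{1/q}$ is $E\big([X]_{1/q}\big)=\sum_{x=0}^{n}[x]_{1/q}\,f_X^B(x) = [n]_q\,\frac{\theta}{1+\theta q^{n-1}}$. -/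
open scoped BigOperators

/-- The `q`-number `[n]_q = (1-q^n)/(1-q)`. -/
noncomputable def qNat (q : ℝ) (n : ℕ) : ℝ := (1 - q ^ n) / (1 - q)

/-- The deformed value `[x]_{1/q} = (q^{-x}-1)/(q^{-1}-1)`. -/
noncomputable def qDef (q : ℝ) (x : ℕ) : ℝ := (q⁻¹ ^ x - 1) / (q⁻¹ - 1)

/-!
The `q`-Pascal rule gives, by induction on `n`, the `q`-binomial theorem
`∑ₓ [n choose x]_q q^(x choose 2) θ^x = ∏_{j<n} (1 + θ q^j)`, so the weights are a probability
distribution. The deformation `[x]_{1/q} = [x]_q / q^(x-1)` is exactly what makes the absorption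
identity `[x]_q [n choose x]_q = [n]_q [n-1 choose x-1]_q` usable: the factor `q^(x-1)` is absorbed by
`q^(x choose 2) = q^(x-1 choose 2) q^(x-1)`, and the mean becomes `[n]_q θ` times the normalising
product of order `n - 1`, divided by the one of order `n`.
-/

open Finset

variable {q : ℝ}

lemma qNat_add (q : ℝ) (a b : ℕ) : qNat q (a + b) = qNat q a + q ^ a * qNat q b := by
  simp only [qNat, pow_add]
  ring

lemma qNat_ne_zero (hq : |q| ≠ 1) {n : ℕ} (hn : n ≠ 0) : qNat q n ≠ 0 := by
  have hpow : q ^ n ≠ 1 := fun h => hq <| by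
    rw [← pow_eq_one_iff_of_nonneg (abs_nonneg q) hn, ← abs_pow, h, abs_one]
  have hq1 : q ≠ 1 := fun h => hq (by rw [h, abs_one])
  exact div_ne_zero (sub_ne_zero.2 hpow.symm) (sub_ne_zero.2 hq1.symm)

lemma qFact_zero (q : ℝ) : qFact q 0 = 1 := prod_range_zero _

lemma qFact_succ (q : ℝ) (n : ℕ) : qFact q (n + 1) = qFact q n * qNat q (n + 1) :=
  prod_range_succ _ n

lemma qFact_ne_zero (hq : |q| ≠ 1) (n : ℕ) : qFact q n ≠ 0 :=
  prod_ne_zero_iff.2 fun k _ => qNat_ne_zero hq k.succ_ne_zero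

lemma qBinom_zero_right (hq : |q| ≠ 1) (n : ℕ) : qBinom q n 0 = 1 := by
  simp [qBinom, qFact_zero, qFact_ne_zero hq]

lemma qBinom_self (hq : |q| ≠ 1) (n : ℕ) : qBinom q n n = 1 := by
  simp [qBinom, qFact_zero, qFact_ne_zero hq]

lemma qBinom_succ_succ (hq : |q| ≠ 1) {m x : ℕ} (hx : x < m) :
    qBinom q (m + 1) (x + 1) = qBinom q m (x + 1) + q ^ (m - x) * qBinom q m x := by
  obtain ⟨k, rfl⟩ := Nat.exists_eq_add_of_lt hx
  have hsplit : qNat q (x + k + 1 + 1) = qNat q (k + 1) + q ^ (k + 1) * qNat q (x + 1) := by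
    rw [← qNat_add]
    ring_nf
  have h₁ : x + k + 1 + 1 - (x + 1) = k + 1 := by omega
  have h₂ : x + k + 1 - (x + 1) = k := by omega
  have h₃ : x + k + 1 - x = k + 1 := by omega
  have := qFact_ne_zero hq x
  have := qFact_ne_zero hq k
  have := qNat_ne_zero hq x.succ_ne_zero
  have := qNat_ne_zero hq k.succ_ne_zero
  simp only [qBinom, h₁, h₂, h₃, qFact_succ q (x + k + 1), qFact_succ q x, qFact_succ q k, hsplit]
  field_simp

lemma qNat_mul_qBinom_succ_succ (hq : |q| ≠ 1) {m x : ℕ} (hx : x ≤ m) :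
    qNat q (x + 1) * qBinom q (m + 1) (x + 1) = qNat q (m + 1) * qBinom q m x := by
  have h : m + 1 - (x + 1) = m - x := by omega
  have := qFact_ne_zero hq x
  have := qFact_ne_zero hq (m - x)
  have := qNat_ne_zero hq x.succ_ne_zero
  simp only [qBinom, h, qFact_succ]
  field_simp

lemma qDef_succ (hq : q ≠ 0) (x : ℕ) : qDef q (x + 1) = qNat q (x + 1) / q ^ x := by
  have hnum : q⁻¹ ^ (x + 1) - 1 = (1 - q ^ (x + 1)) * q⁻¹ ^ (x + 1) := by
    rw [sub_mul, one_mul, ← mul_pow, mul_inv_cancel₀ hq, one_pow]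
  have hden : q⁻¹ - 1 = (1 - q) * q⁻¹ := by
    rw [sub_mul, one_mul, mul_inv_cancel₀ hq]
  rw [qDef, qNat, hnum, hden, mul_div_mul_comm, pow_succ q⁻¹, mul_div_cancel_right₀ _ (inv_ne_zero hq),
    inv_pow, ← div_eq_mul_inv]

lemma sum_qBinom_mul_pow_eq_prod (hq : |q| ≠ 1) (θ : ℝ) (n : ℕ) :
    ∑ x ∈ range (n + 1), qBinom q n x * q ^ (x * (x - 1) / 2) * θ ^ x =
      ∏ j ∈ range n, (1 + θ * q ^ j) := by
  induction n with
  | zero => simp [qBinom_self hq]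
  | succ m ih =>
    set t : ℕ → ℕ → ℝ := fun n x => qBinom q n x * q ^ (x * (x - 1) / 2) * θ ^ x with ht
    have hstep : ∀ x ∈ range m, t (m + 1) (x + 1) = t m (x + 1) + θ * q ^ m * t m x := by
      intro x hx
      have hx : x < m := mem_range.1 hx
      have hpow : q ^ (m - x) * q ^ x = q ^ m := by rw [← pow_add, Nat.sub_add_cancel hx.le]
      simp only [ht, qBinom_succ_succ hq hx, Nat.triangle_succ, pow_add, pow_succ]
      linear_combination qBinom q m x * q ^ (x * (x - 1) / 2) * θ ^ x * θ * hpow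
    change ∑ x ∈ range (m + 1), t m x = _ at ih
    change ∑ x ∈ range (m + 1 + 1), t (m + 1) x = _
    have hlast : t (m + 1) (m + 1) = θ * q ^ m * t m m := by
      simp only [ht, qBinom_self hq, Nat.triangle_succ, pow_add, pow_succ]
      ring
    have hfirst : t (m + 1) 0 = t m 0 := by simp [ht, qBinom_zero_right hq]
    have hlow : ∑ x ∈ range (m + 1), t m x = ∑ x ∈ range m, t m (x + 1) + t m 0 :=
      sum_range_succ' _ m
    have hhigh : ∑ x ∈ range (m + 1), t m x = ∑ x ∈ range m, t m x + t m m :=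
      sum_range_succ _ m
    rw [sum_range_succ, sum_range_succ', sum_congr rfl hstep, sum_add_distrib, ← mul_sum, hlast,
      hfirst, prod_range_succ, ← ih]
    linear_combination -hlow - θ * q ^ m * hhigh

lemma sum_qDef_mul_qBinom_mul_pow (hq₀ : q ≠ 0) (hq : |q| ≠ 1) (θ : ℝ) (m : ℕ) :
    ∑ x ∈ range (m + 2), qDef q x * (qBinom q (m + 1) x * q ^ (x * (x - 1) / 2) * θ ^ x) =
      qNat q (m + 1) * θ * ∏ j ∈ range m, (1 + θ * q ^ j) := by
  have hterm : ∀ x ∈ range (m + 1),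
      qDef q (x + 1) * (qBinom q (m + 1) (x + 1) * q ^ ((x + 1) * (x + 1 - 1) / 2) * θ ^ (x + 1)) =
        qNat q (m + 1) * θ * (qBinom q m x * q ^ (x * (x - 1) / 2) * θ ^ x) := by
    intro x hx
    have habs := qNat_mul_qBinom_succ_succ hq (Nat.lt_succ_iff.1 (mem_range.1 hx))
    have := pow_ne_zero x hq₀
    rw [qDef_succ hq₀, Nat.triangle_succ, pow_add, pow_succ θ]
    field_simp
    linear_combination θ ^ x * θ * habs
  rw [sum_range_succ', sum_congr rfl hterm, ← mul_sum, sum_qBinom_mul_pow_eq_prod hq]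
  simp [qDef]

/-- **Mean of the deformed q-binomial variable**:
`E([X]_{1/q}) = [n]_q θ / (1 + θ q^{n-1})`. -/
theorem qBinomial_deformed_mean (q θ : ℝ) (hq0 : 0 < q) (hq1 : q < 1) (hθ : 0 < θ)
    (n : ℕ) :
    ∑ x ∈ Finset.range (n + 1),
      qDef q x * (qBinom q n x * q ^ (x * (x - 1) / 2) * θ ^ x /
        ∏ j ∈ Finset.range n, (1 + θ * q ^ j)) =
      qNat q n * (θ / (1 + θ * q ^ ((n : ℤ) - 1))) := by
  have hq : |q| ≠ 1 := by rw [abs_of_pos hq0]; exact hq1.ne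
  cases n with
  | zero => simp [qDef, qNat]
  | succ m =>
    have hfactor : ∀ j : ℕ, 0 < 1 + θ * q ^ j := fun j => by positivity
    simp only [mul_div_assoc']
    rw [← sum_div, sum_qDef_mul_qBinom_mul_pow hq0.ne' hq, prod_range_succ, Nat.cast_succ,
      add_sub_cancel_right, zpow_natCast]
    field_simp [(hfactor m).ne']
end
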